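/- Let ρ be a 2×2 complex positive semidefinite matrix with tr ρ = 1, with orthonormal eigenbasis {|1⟩, |2⟩} and eigenvalues p_1, p_2 (so p_1 + p_2 = 1). Let H be a 2×2 Hermitian matrix with tr H = 0 and tr(H²) = 2, and write H_{ij} = ⟨i|H|j⟩. Then 8 Σ_{i≠j} (p_i p_j / (p_i + p_j)) |H_{ij}|² + 4 (Σ_i p_i H_{ii}² − (Σ_i p_i H_{ii})²) = 8 (1 − tr(ρ²)). In particular the left-hand side is independent of the choice of the traceless unit-norm Hermitian H. -/

import Mathlib

/-!
In the eigenbasis of `ρ` the generator becomes `M = U†HU`, again Hermitian with `tr M = 0` and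
`tr M² = 2`, so `M = [[a, c], [c̄, -a]]` with `a² + |c|² = 1`. With `p₀ + p₁ = 1` the left-hand side
is `16 p₀p₁ |c|² + 4 a² (1 - (p₀ - p₁)²) = 16 p₀p₁ (|c|² + a²) = 16 p₀p₁ = 8 (1 - p₀² - p₁²)`.
-/

open scoped ComplexOrder

open Matrix

namespace Matrix

section

variable {n R : Type*} [Fintype n] [CommRing R] [StarRing R]

theorem conjTranspose_transpose_of_mul_mul_apply (v : n → n → R) (A : Matrix n n R) (i j : n) :
    ((of v)ᵀᴴ * A * (of v)ᵀ) i j = star (v i) ⬝ᵥ A *ᵥ v j := by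
  simp only [mul_apply, conjTranspose_apply, transpose_apply, of_apply, dotProduct, mulVec,
    Pi.star_apply, Finset.sum_mul, Finset.mul_sum, mul_assoc]
  exact Finset.sum_comm

variable [DecidableEq n]

theorem transpose_of_mem_unitaryGroup {v : n → n → R}
    (hv : ∀ i j, star (v i) ⬝ᵥ v j = if i = j then 1 else 0) :
    (of v)ᵀ ∈ unitaryGroup n R := by
  rw [mem_unitaryGroup_iff']
  ext i j
  simpa [mul_apply, one_apply, dotProduct] using hv i j

theorem sum_smul_vecMulVec_star (v : n → n → R) (d : n → R) :
    ∑ i, d i • vecMulVec (v i) (star (v i)) = (of v)ᵀ * diagonal d * (of v)ᵀᴴ := by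
  ext j k
  simp [mul_apply, sum_apply, vecMulVec_apply, diagonal_apply, mul_left_comm, mul_assoc]

theorem trace_mul_mul_conjTranspose_of_mem_unitaryGroup {U : Matrix n n R}
    (hU : U ∈ unitaryGroup n R) (A : Matrix n n R) : (U * A * Uᴴ).trace = A.trace := by
  rw [trace_mul_cycle, ← star_eq_conjTranspose, mem_unitaryGroup_iff'.mp hU, Matrix.one_mul]

theorem mul_mul_conjTranspose_mul_self_of_mem_unitaryGroup {U : Matrix n n R}
    (hU : U ∈ unitaryGroup n R) (A B : Matrix n n R) :
    U * A * Uᴴ * (U * B * Uᴴ) = U * (A * B) * Uᴴ :=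
  (map_mul (Unitary.conjStarAlgAut R _ ⟨U, hU⟩) A B).symm

end

theorem IsHermitian.trace_mul_self {n 𝕜 : Type*} [Fintype n] [RCLike 𝕜] {A : Matrix n n 𝕜}
    (hA : A.IsHermitian) : (A * A).trace = (↑(∑ i, ∑ j, ‖A i j‖ ^ 2) : 𝕜) := by
  simp only [trace, diag_apply, mul_apply]
  push_cast
  refine Finset.sum_congr rfl fun i _ => Finset.sum_congr rfl fun j _ => ?_
  rw [← hA.apply j i, RCLike.star_def, RCLike.mul_conj]

theorem IsHermitian.fin_two_of_trace_eq_zero {A : Matrix (Fin 2) (Fin 2) ℂ} (hA : A.IsHermitian)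
    (h0 : A.trace = 0) (h2 : (A * A).trace = 2) :
    (A 1 1).re = -(A 0 0).re ∧ ‖A 1 0‖ = ‖A 0 1‖ ∧ ‖A 0 1‖ ^ 2 = 1 - (A 0 0).re ^ 2 := by
  have h11 : A 1 1 = -A 0 0 := by
    rw [trace_fin_two] at h0
    linear_combination h0
  have h10 : ‖A 1 0‖ = ‖A 0 1‖ := by rw [← hA.apply 1 0, norm_star]
  have h00 : ‖A 0 0‖ = |(A 0 0).re| := by
    rw [← hA.coe_re_apply_self 0]
    exact Complex.norm_real _
  have h2' : ∑ i, ∑ j, ‖A i j‖ ^ 2 = (2 : ℝ) := by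
    apply RCLike.ofReal_injective (K := ℂ)
    rw [← hA.trace_mul_self, h2, RCLike.ofReal_ofNat]
  simp only [Fin.sum_univ_two, h11, norm_neg, h10, h00, sq_abs] at h2'
  exact ⟨by rw [h11, Complex.neg_re], h10, by linarith⟩

end Matrix

theorem stmt11_general (ρ H : Matrix (Fin 2) (Fin 2) ℂ) (p : Fin 2 → ℝ) (v : Fin 2 → Fin 2 → ℂ)
    (hortho : ∀ i j, dotProduct (star (v i)) (v j) = if i = j then 1 else 0)
    (hspec : ρ = ∑ i, (p i : ℂ) • Matrix.vecMulVec (v i) (star (v i)))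
    (hp : p 0 + p 1 = 1)
    (hH : H.IsHermitian) (htrH : H.trace = 0) (htrH2 : (H * H).trace = 2) :
    8 * (∑ i, ∑ j,
        if i ≠ j then
          p i * p j / (p i + p j) *
            (‖dotProduct (star (v i)) (H.mulVec (v j))‖) ^ 2
        else 0) +
      4 * ((∑ i, p i * ((dotProduct (star (v i)) (H.mulVec (v i))).re) ^ 2) -
        (∑ i, p i * (dotProduct (star (v i)) (H.mulVec (v i))).re) ^ 2) =
    8 * (1 - (ρ * ρ).trace.re) := by
  simp only [← conjTranspose_transpose_of_mul_mul_apply, Fin.sum_univ_two, ne_eq,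
    not_true_eq_false, zero_ne_one, one_ne_zero, not_false_eq_true, if_true, if_false,
    zero_add, add_zero]
  set U := (of v)ᵀ
  have hU : U ∈ unitaryGroup (Fin 2) ℂ := transpose_of_mem_unitaryGroup hortho
  have hU' : Uᴴ ∈ unitaryGroup (Fin 2) ℂ := Unitary.star_mem hU
  have hM : (Uᴴ * H * U).IsHermitian := isHermitian_conjTranspose_mul_mul U hH
  have htrM : (Uᴴ * H * U).trace = 0 := by
    simpa [htrH] using trace_mul_mul_conjTranspose_of_mem_unitaryGroup hU' H
  have htrM2 : (Uᴴ * H * U * (Uᴴ * H * U)).trace = 2 := by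
    have hMM := mul_mul_conjTranspose_mul_self_of_mem_unitaryGroup hU' H H
    simp only [conjTranspose_conjTranspose] at hMM
    simpa [hMM, htrH2] using trace_mul_mul_conjTranspose_of_mem_unitaryGroup hU' (H * H)
  obtain ⟨h11, h10, h01⟩ := hM.fin_two_of_trace_eq_zero htrM htrM2
  have hρρ : (ρ * ρ).trace.re = p 0 ^ 2 + p 1 ^ 2 := by
    rw [hspec, sum_smul_vecMulVec_star, mul_mul_conjTranspose_mul_self_of_mem_unitaryGroup hU,
      trace_mul_mul_conjTranspose_of_mem_unitaryGroup hU, diagonal_mul_diagonal, trace_diagonal]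
    simp [Fin.sum_univ_two, sq]
  rw [hρρ, h11, h10, h01, add_comm (p 1), hp, show p 1 = 1 - p 0 by linarith]
  ring

/-- For a qubit density matrix `ρ = Σ_i p i |v i⟩⟨v i|` (positive
semidefinite, trace one, orthonormal eigenbasis `v`, eigenvalues `p` with
`p 0 + p 1 = 1`) and a traceless Hermitian `H` with `tr H² = 2`, the gap
`4 Var[ρ,H] − F_Q[ρ,H]`, written in terms of the matrix elements `H_{ij} = ⟨v i|H|v j⟩`,
equals `8 (1 − tr ρ²)`, independently of the choice of `H`. -/
theorem stmt11 (ρ H : Matrix (Fin 2) (Fin 2) ℂ) (p : Fin 2 → ℝ) (v : Fin 2 → Fin 2 → ℂ)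
    (hρ : ρ.PosSemidef) (htrρ : ρ.trace = 1)
    (hortho : ∀ i j, dotProduct (star (v i)) (v j) = if i = j then 1 else 0)
    (hspec : ρ = ∑ i, (p i : ℂ) • Matrix.vecMulVec (v i) (star (v i)))
    (hp : p 0 + p 1 = 1)
    (hH : H.IsHermitian) (htrH : H.trace = 0) (htrH2 : (H * H).trace = 2) :
    8 * (∑ i, ∑ j,
        if i ≠ j then
          p i * p j / (p i + p j) *
            (‖dotProduct (star (v i)) (H.mulVec (v j))‖) ^ 2
        else 0) +
      4 * ((∑ i, p i * ((dotProduct (star (v i)) (H.mulVec (v i))).re) ^ 2) -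
        (∑ i, p i * (dotProduct (star (v i)) (H.mulVec (v i))).re) ^ 2) =
    8 * (1 - (ρ * ρ).trace.re) :=
  stmt11_general ρ H p v hortho hspec hp hH htrH htrH2
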